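/- arXiv:2104.09298 — 7 statements merged into one kernel-verified Lean document; each statement's English description precedes it below -/
import Mathlib

section
/- Let x1,x2,x3,x4,y1,y2,y3,y4 be rational numbers and define X1 = x1·x3, X2 = x2·x4, X3 = −y1·y3, X4 = −y2·y4, Y1 = −x1·x4, Y2 = −x2·x3, Y3 = y1·y4, Y4 = y2·y3. Then X1·X2 = Y1·Y2 and X3·X4 = Y3·Y4 always hold, and (x1^5+x2^5)(x3^5+x4^5) = (y1^5+y2^5)(y3^5+y4^5) holds if and only if X1^5+X2^5+X3^5+X4^5 = Y1^5+Y2^5+Y3^5+Y4^5. -/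
theorem stmt_1 (x₁ x₂ x₃ x₄ y₁ y₂ y₃ y₄ : ℚ)
    (X₁ X₂ X₃ X₄ Y₁ Y₂ Y₃ Y₄ : ℚ)
    (hX₁ : X₁ = x₁ * x₃) (hX₂ : X₂ = x₂ * x₄)
    (hX₃ : X₃ = -(y₁ * y₃)) (hX₄ : X₄ = -(y₂ * y₄))
    (hY₁ : Y₁ = -(x₁ * x₄)) (hY₂ : Y₂ = -(x₂ * x₃))
    (hY₃ : Y₃ = y₁ * y₄) (hY₄ : Y₄ = y₂ * y₃) :
    X₁ * X₂ = Y₁ * Y₂ ∧ X₃ * X₄ = Y₃ * Y₄ ∧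
    ((x₁ ^ 5 + x₂ ^ 5) * (x₃ ^ 5 + x₄ ^ 5) =
        (y₁ ^ 5 + y₂ ^ 5) * (y₃ ^ 5 + y₄ ^ 5) ↔
      X₁ ^ 5 + X₂ ^ 5 + X₃ ^ 5 + X₄ ^ 5 =
        Y₁ ^ 5 + Y₂ ^ 5 + Y₃ ^ 5 + Y₄ ^ 5) := by
  subst hX₁ hX₂ hX₃ hX₄ hY₁ hY₂ hY₃ hY₄
  refine ⟨by ring, by ring, ?_⟩
  constructor <;> intro h <;> linear_combination h
end

section
/- Let s1, t1, S1, h be rational numbers such that 2h + 3(s1+t1)(t1−S1) ≠ 0, and define s2 = [h^2 + (s1^2 + (3t1−2S1)s1 + 3t1^2 − 3t1·S1 + S1^2)h + (s1+t1)(t1−S1)(s1^2 + (t1−S1)s1 + t1^2 − t1·S1 + S1^2)] / (2h + 3(s1+t1)(t1−S1)) and t2 = [−h^2 + (s1^2 + s1·S1 + S1^2)h + (s1+t1)(t1−S1)(s1^2 + (t1−S1)s1 + t1^2 − t1·S1 + S1^2)] / (2h + 3(s1+t1)(t1−S1)). Then s2^2 − t2^2 − (s1^2 + s1·S1 + S1^2)·s2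 + (s1^2 − 2s1·S1 + S1^2 + 3s1·t1 − 3t1·S1 + 3t1^2)·t2 + (s1+t1)(S1−t1)(s1^2 − s1·S1 + S1^2 + s1·t1 − t1·S1 + t1^2) = 0. -/
theorem conic_div_eq_zero_of_homogenized_eq_zero {K : Type*} [Field K] {A B C a b D : K} (hD : D ≠ 0)
    (h : a ^ 2 - b ^ 2 - A * a * D + B * b * D + C * D ^ 2 = 0) :
    (a / D) ^ 2 - (b / D) ^ 2 - A * (a / D) + B * (b / D) + C = 0 := by
  field_simp
  linear_combination h

theorem stmt_3 (s₁ t₁ S₁ h s₂ t₂ : ℚ)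
    (hden : 2 * h + 3 * (s₁ + t₁) * (t₁ - S₁) ≠ 0)
    (hs₂ : s₂ = (h ^ 2 +
        (s₁ ^ 2 + (3 * t₁ - 2 * S₁) * s₁ + 3 * t₁ ^ 2 - 3 * t₁ * S₁ + S₁ ^ 2) * h +
        (s₁ + t₁) * (t₁ - S₁) *
          (s₁ ^ 2 + (t₁ - S₁) * s₁ + t₁ ^ 2 - t₁ * S₁ + S₁ ^ 2)) /
      (2 * h + 3 * (s₁ + t₁) * (t₁ - S₁)))
    (ht₂ : t₂ = (-h ^ 2 + (s₁ ^ 2 + s₁ * S₁ + S₁ ^ 2) * h +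
        (s₁ + t₁) * (t₁ - S₁) *
          (s₁ ^ 2 + (t₁ - S₁) * s₁ + t₁ ^ 2 - t₁ * S₁ + S₁ ^ 2)) /
      (2 * h + 3 * (s₁ + t₁) * (t₁ - S₁))) :
    s₂ ^ 2 - t₂ ^ 2 - (s₁ ^ 2 + s₁ * S₁ + S₁ ^ 2) * s₂ +
      (s₁ ^ 2 - 2 * s₁ * S₁ + S₁ ^ 2 + 3 * s₁ * t₁ - 3 * t₁ * S₁ + 3 * t₁ ^ 2) * t₂ +
      (s₁ + t₁) * (S₁ - t₁) *
        (s₁ ^ 2 - s₁ * S₁ + S₁ ^ 2 + s₁ * t₁ - t₁ * S₁ + t₁ ^ 2) = 0 := by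
  subst hs₂ ht₂
  exact conic_div_eq_zero_of_homogenized_eq_zero hden (by ring)
end

section
/- Let s1, S1, h be rational numbers with S1 ≠ 0, let t1 = (S1^2 − h)/S1, suppose 2h + 3(s1+t1)(t1−S1) ≠ 0 and S1^2 + 3S1·s1 − 3h ≠ 0, and define s2 = [h^2 + (s1^2 + (3t1−2S1)s1 + 3t1^2 − 3t1·S1 + S1^2)h + (s1+t1)(t1−S1)(s1^2 + (t1−S1)s1 + t1^2 − t1·S1 + S1^2)] / (2h + 3(s1+t1)(t1−S1)). Then s1^2 − 4s2 = (S1^2 − S1·s1 + h)(S1·s1 − 2h)^2 / (S1^2·(S1^2 + 3S1·s1 − 3h)). -/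
/-!
Writing `h = S₁ (S₁ - t₁)`, the numerator and the denominator of `s₂` both acquire the factor
`t₁ - S₁`; after cancelling it, `s₁ ^ 2 - 4 s₂` has numerator
`(2 S₁ - s₁ - t₁) (s₁ + 2 t₁ - 2 S₁) ^ 2` over `3 (s₁ + t₁) - 2 S₁`, and each factor on the
right-hand side of the claim is `S₁` times one of these three.
-/

section

variable {R : Type*} [CommRing R] (s S t h : R)

lemma s₂_denom_eq_mul (hh : h = S * (S - t)) :
    2 * h + 3 * (s + t) * (t - S) = (t - S) * (3 * (s + t) - 2 * S) := by
  subst hh; ring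

lemma s₂_numer_eq_mul (hh : h = S * (S - t)) :
    h ^ 2 + (s ^ 2 + (3 * t - 2 * S) * s + 3 * t ^ 2 - 3 * t * S + S ^ 2) * h +
        (s + t) * (t - S) * (s ^ 2 + (t - S) * s + t ^ 2 - t * S + S ^ 2) =
      (t - S) * (s ^ 3 + 2 * (t - S) * s ^ 2 - S * (t - S) * s + 2 * (t - S) ^ 2 * s
        - S * (t - S) ^ 2 + (t - S) ^ 3) := by
  subst hh; ring

lemma discr_mul_s₂_denom :
    s ^ 2 * (3 * (s + t) - 2 * S) - 4 * (s ^ 3 + 2 * (t - S) * s ^ 2 - S * (t - S) * s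
        + 2 * (t - S) ^ 2 * s - S * (t - S) ^ 2 + (t - S) ^ 3) =
      (2 * S - s - t) * (s + 2 * t - 2 * S) ^ 2 := by
  ring

end

theorem stmt_4_general (s₁ S₁ h t₁ s₂ : ℚ) (hS₁ : S₁ ≠ 0)
    (ht₁ : t₁ = (S₁ ^ 2 - h) / S₁)
    (hden : 2 * h + 3 * (s₁ + t₁) * (t₁ - S₁) ≠ 0)
    (hs₂ : s₂ = (h ^ 2 +
        (s₁ ^ 2 + (3 * t₁ - 2 * S₁) * s₁ + 3 * t₁ ^ 2 - 3 * t₁ * S₁ + S₁ ^ 2) * h +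
        (s₁ + t₁) * (t₁ - S₁) *
          (s₁ ^ 2 + (t₁ - S₁) * s₁ + t₁ ^ 2 - t₁ * S₁ + S₁ ^ 2)) /
      (2 * h + 3 * (s₁ + t₁) * (t₁ - S₁))) :
    s₁ ^ 2 - 4 * s₂ =
      (S₁ ^ 2 - S₁ * s₁ + h) * (S₁ * s₁ - 2 * h) ^ 2 /
        (S₁ ^ 2 * (S₁ ^ 2 + 3 * S₁ * s₁ - 3 * h)) := by
  have hh : h = S₁ * (S₁ - t₁) := by rw [ht₁]; field_simp; ring
  rw [s₂_denom_eq_mul s₁ S₁ t₁ h hh] at hden hs₂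
  obtain ⟨hu, hq⟩ := mul_ne_zero_iff.mp hden
  rw [s₂_numer_eq_mul s₁ S₁ t₁ h hh, mul_div_mul_left _ _ hu] at hs₂
  have hfactor : (S₁ ^ 2 - S₁ * s₁ + h) * (S₁ * s₁ - 2 * h) ^ 2 /
      (S₁ ^ 2 * (S₁ ^ 2 + 3 * S₁ * s₁ - 3 * h)) =
      S₁ ^ 3 * ((2 * S₁ - s₁ - t₁) * (s₁ + 2 * t₁ - 2 * S₁) ^ 2) /
        (S₁ ^ 3 * (3 * (s₁ + t₁) - 2 * S₁)) := by
    subst hh; ring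
  rw [hfactor, mul_div_mul_left _ _ (pow_ne_zero 3 hS₁), hs₂, ← mul_div_assoc, sub_div' hq,
    discr_mul_s₂_denom]

theorem stmt_4 (s₁ S₁ h t₁ s₂ : ℚ) (hS₁ : S₁ ≠ 0)
    (ht₁ : t₁ = (S₁ ^ 2 - h) / S₁)
    (hden : 2 * h + 3 * (s₁ + t₁) * (t₁ - S₁) ≠ 0)
    (hden2 : S₁ ^ 2 + 3 * S₁ * s₁ - 3 * h ≠ 0)
    (hs₂ : s₂ = (h ^ 2 +
        (s₁ ^ 2 + (3 * t₁ - 2 * S₁) * s₁ + 3 * t₁ ^ 2 - 3 * t₁ * S₁ + S₁ ^ 2) * h +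
        (s₁ + t₁) * (t₁ - S₁) *
          (s₁ ^ 2 + (t₁ - S₁) * s₁ + t₁ ^ 2 - t₁ * S₁ + S₁ ^ 2)) /
      (2 * h + 3 * (s₁ + t₁) * (t₁ - S₁))) :
    s₁ ^ 2 - 4 * s₂ =
      (S₁ ^ 2 - S₁ * s₁ + h) * (S₁ * s₁ - 2 * h) ^ 2 /
        (S₁ ^ 2 * (S₁ ^ 2 + 3 * S₁ * s₁ - 3 * h)) :=
  stmt_4_general s₁ S₁ h t₁ s₂ hS₁ ht₁ hden hs₂
end

section
/- Let s1, S1, h be rational numbers with S1 ≠ 0, let t1 = (S1^2 − h)/S1, suppose 2h + 3(s1+t1)(t1−S1) ≠ 0 and S1^2 + 3S1·s1 − 3h ≠ 0, and define t2 = [−h^2 + (s1^2 + s1·S1 + S1^2)h + (s1+t1)(t1−S1)(s1^2 + (t1−S1)s1 + t1^2 − t1·S1 + S1^2)] / (2h + 3(s1+t1)(t1−S1)). Then t1^2 − 4t2 = (S1^2 − S1·s1 + h)(S1^2 + 2S1·s1 − h)^2 / (S1^2·(S1^2 + 3S1·s1 − 3h)). -/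
/-! Substituting `h = S₁ (S₁ - t₁)` makes every quantity polynomial in `s₁, S₁, t₁`.
The numerator and the denominator of `t₂` then share the factor `t₁ - S₁`, and after cancelling
it both sides of the identity reduce to `(2S₁ - s₁ - t₁)(2s₁ + t₁)² / (3s₁ + 3t₁ - 2S₁)`. -/

section

variable {R : Type*} [CommRing R] (s S t : R)

theorem t₂_denom_eq_mul :
    2 * (S * (S - t)) + 3 * (s + t) * (t - S) = (t - S) * (3 * s + 3 * t - 2 * S) := by
  ring

theorem t₂_numer_eq_mul :
    -(S * (S - t)) ^ 2 + (s ^ 2 + s * S + S ^ 2) * (S * (S - t)) +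
        (s + t) * (t - S) * (s ^ 2 + (t - S) * s + t ^ 2 - t * S + S ^ 2) =
      (t - S) * (s ^ 3 + (t - S) * (2 * s ^ 2 + 2 * s * t + t ^ 2)) := by
  ring

end

section

variable {K : Type*} [Field K] (s S t : K)

theorem sq_sub_four_mul_reduced_t₂ (hu : 3 * s + 3 * t - 2 * S ≠ 0) :
    t ^ 2 - 4 * ((s ^ 3 + (t - S) * (2 * s ^ 2 + 2 * s * t + t ^ 2)) / (3 * s + 3 * t - 2 * S)) =
      (2 * S - s - t) * (2 * s + t) ^ 2 / (3 * s + 3 * t - 2 * S) := by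
  rw [eq_div_iff hu, sub_mul, mul_assoc, div_mul_cancel₀ _ hu]
  ring

theorem discr_formula_eq_reduced (hS : S ≠ 0) :
    (S ^ 2 - S * s + S * (S - t)) * (S ^ 2 + 2 * S * s - S * (S - t)) ^ 2 /
        (S ^ 2 * (S ^ 2 + 3 * S * s - 3 * (S * (S - t)))) =
      (2 * S - s - t) * (2 * s + t) ^ 2 / (3 * s + 3 * t - 2 * S) := by
  rw [← mul_div_mul_left _ (3 * s + 3 * t - 2 * S) (pow_ne_zero 3 hS)]
  congr 1 <;> ring

end

theorem stmt_5_general (s₁ S₁ h t₁ t₂ : ℚ) (hS₁ : S₁ ≠ 0)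
    (ht₁ : t₁ = (S₁ ^ 2 - h) / S₁)
    (hden : 2 * h + 3 * (s₁ + t₁) * (t₁ - S₁) ≠ 0)
    (ht₂ : t₂ = (-h ^ 2 + (s₁ ^ 2 + s₁ * S₁ + S₁ ^ 2) * h +
        (s₁ + t₁) * (t₁ - S₁) *
          (s₁ ^ 2 + (t₁ - S₁) * s₁ + t₁ ^ 2 - t₁ * S₁ + S₁ ^ 2)) /
      (2 * h + 3 * (s₁ + t₁) * (t₁ - S₁))) :
    t₁ ^ 2 - 4 * t₂ =
      (S₁ ^ 2 - S₁ * s₁ + h) * (S₁ ^ 2 + 2 * S₁ * s₁ - h) ^ 2 /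
        (S₁ ^ 2 * (S₁ ^ 2 + 3 * S₁ * s₁ - 3 * h)) := by
  have hh : h = S₁ * (S₁ - t₁) := by
    rw [ht₁]
    field_simp
    ring
  subst hh ht₂
  rw [t₂_denom_eq_mul] at hden ⊢
  rw [t₂_numer_eq_mul, mul_div_mul_left _ _ (left_ne_zero_of_mul hden),
    sq_sub_four_mul_reduced_t₂ _ _ _ (right_ne_zero_of_mul hden), discr_formula_eq_reduced _ _ _ hS₁]

theorem stmt_5 (s₁ S₁ h t₁ t₂ : ℚ) (hS₁ : S₁ ≠ 0)
    (ht₁ : t₁ = (S₁ ^ 2 - h) / S₁)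
    (hden : 2 * h + 3 * (s₁ + t₁) * (t₁ - S₁) ≠ 0)
    (hden2 : S₁ ^ 2 + 3 * S₁ * s₁ - 3 * h ≠ 0)
    (ht₂ : t₂ = (-h ^ 2 + (s₁ ^ 2 + s₁ * S₁ + S₁ ^ 2) * h +
        (s₁ + t₁) * (t₁ - S₁) *
          (s₁ ^ 2 + (t₁ - S₁) * s₁ + t₁ ^ 2 - t₁ * S₁ + S₁ ^ 2)) /
      (2 * h + 3 * (s₁ + t₁) * (t₁ - S₁))) :
    t₁ ^ 2 - 4 * t₂ =
      (S₁ ^ 2 - S₁ * s₁ + h) * (S₁ ^ 2 + 2 * S₁ * s₁ - h) ^ 2 /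
        (S₁ ^ 2 * (S₁ ^ 2 + 3 * S₁ * s₁ - 3 * h)) :=
  stmt_5_general s₁ S₁ h t₁ t₂ hS₁ ht₁ hden ht₂
end

section
/- Let S1, h, m be rational numbers with S1 ≠ 0 and 3m^2 + 1 ≠ 0, and define s1 = ((3m^2+1)h − (m^2−1)S1^2) / ((3m^2+1)S1). Then (S1^2 − S1·s1 + h)·(S1^2 + 3S1·s1 − 3h) = (4m·S1^2/(3m^2+1))^2; in particular, the product (S1^2 − S1·s1 + h)(S1^2 + 3S1·s1 − 3h) is the square of a rational number. -/
theorem stmt_6 (S₁ h m s₁ : ℚ) (hS₁ : S₁ ≠ 0) (hm : 3 * m ^ 2 + 1 ≠ 0)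
    (hs₁ : s₁ = ((3 * m ^ 2 + 1) * h - (m ^ 2 - 1) * S₁ ^ 2) /
      ((3 * m ^ 2 + 1) * S₁)) :
    (S₁ ^ 2 - S₁ * s₁ + h) * (S₁ ^ 2 + 3 * S₁ * s₁ - 3 * h) =
      (4 * m * S₁ ^ 2 / (3 * m ^ 2 + 1)) ^ 2 ∧
    ∃ r : ℚ, (S₁ ^ 2 - S₁ * s₁ + h) * (S₁ ^ 2 + 3 * S₁ * s₁ - 3 * h) = r ^ 2 := by
  have key : (S₁ ^ 2 - S₁ * s₁ + h) * (S₁ ^ 2 + 3 * S₁ * s₁ - 3 * h) =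
      (4 * m * S₁ ^ 2 / (3 * m ^ 2 + 1)) ^ 2 := by
    subst hs₁
    field_simp
    ring
  exact ⟨key, _, key⟩
end

section
/- Let S1, h, m be rational numbers with S1 ≠ 0 and 3m^2 + 1 ≠ 0. Define t1 = (S1^2 − h)/S1, s1 = ((3m^2+1)h − (m^2−1)S1^2)/((3m^2+1)S1), and suppose 2h + 3(s1+t1)(t1−S1) ≠ 0. Define S2 = s2 where s2 = [h^2 + (s1^2 + (3t1−2S1)s1 + 3t1^2 − 3t1·S1 + S1^2)h + (s1+t1)(t1−S1)(s1^2 + (t1−S1)s1 + t1^2 − t1·S1 + S1^2)] / (2h + 3(s1+t1)(t1−S1)). Then S1^2 − 4S2 = [(m^2−1)(3m^2+1)^2·h^2 + 2S1^2(m^4−1)(3m^2+1)·h + S1^4·m^2(m^2+3)^2] / ((3m^2+1)·S1)^2. -/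
set_option maxHeartbeats 2000000


theorem stmt_7 (S₁ h m t₁ s₁ s₂ S₂ : ℚ) (hS₁ : S₁ ≠ 0) (hm : 3 * m ^ 2 + 1 ≠ 0)
    (ht₁ : t₁ = (S₁ ^ 2 - h) / S₁)
    (hs₁ : s₁ = ((3 * m ^ 2 + 1) * h - (m ^ 2 - 1) * S₁ ^ 2) /
      ((3 * m ^ 2 + 1) * S₁))
    (hden : 2 * h + 3 * (s₁ + t₁) * (t₁ - S₁) ≠ 0)
    (hs₂ : s₂ = (h ^ 2 +
        (s₁ ^ 2 + (3 * t₁ - 2 * S₁) * s₁ + 3 * t₁ ^ 2 - 3 * t₁ * S₁ + S₁ ^ 2) * h +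
        (s₁ + t₁) * (t₁ - S₁) *
          (s₁ ^ 2 + (t₁ - S₁) * s₁ + t₁ ^ 2 - t₁ * S₁ + S₁ ^ 2)) /
      (2 * h + 3 * (s₁ + t₁) * (t₁ - S₁)))
    (hS₂ : S₂ = s₂) :
    S₁ ^ 2 - 4 * S₂ =
      ((m ^ 2 - 1) * (3 * m ^ 2 + 1) ^ 2 * h ^ 2 +
        2 * S₁ ^ 2 * (m ^ 4 - 1) * (3 * m ^ 2 + 1) * h +
        S₁ ^ 4 * m ^ 2 * (m ^ 2 + 3) ^ 2) / ((3 * m ^ 2 + 1) * S₁) ^ 2 := by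
  have hD : 2 * h + 3 * (s₁ + t₁) * (t₁ - S₁) = -4 * h / (3 * m ^ 2 + 1) := by
    rw [ht₁, hs₁]
    field_simp
    ring
  have hh : h ≠ 0 := by
    intro h0
    apply hden
    rw [hD, h0]
    simp
  rw [hD] at hs₂
  subst hS₂ hs₂ ht₁ hs₁
  field_simp
  ring
end

section
/- Let S1, m, u be rational numbers with S1 ≠ 0, 3m^2+1 ≠ 0 and (m+1)u^2 − m + 1 ≠ 0, and define h = −2S1^2·u·((m+1)(m^2+1)u − m(m^2+3)) / ((3m^2+1)((m+1)u^2 − m + 1)). Then the quantity (m^2−1)(3m^2+1)^2·h^2 + 2S1^2(m^4−1)(3m^2+1)·h + S1^4·m^2(m^2+3)^2 is the square of a rational number. -/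
/-!
The quadratic `Q(h) = A h² + B h + c²` takes the square value `c²` at `h = 0`. The line
`r = c + t h` through `(0, c)` meets the conic `r² = Q(h)` a second time where
`(A - t²) h = 2 c t - B`, and the displayed `h` is that point for the slope
`t = (m - 1)(3m² + 1) / u` (the case `u = 0` being the point `h = 0` itself).
-/

theorem quadratic_eq_sq_of_chord {R : Type*} [CommRing R] {A B c t h : R}
    (hh : (A - t ^ 2) * h = 2 * c * t - B) :
    A * h ^ 2 + B * h + c ^ 2 = (c + t * h) ^ 2 := by
  linear_combination h * hh

theorem stmt_8_general (S₁ m u h : ℚ)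
    (hu : (m + 1) * u ^ 2 - m + 1 ≠ 0)
    (hh : h = -2 * S₁ ^ 2 * u * ((m + 1) * (m ^ 2 + 1) * u - m * (m ^ 2 + 3)) /
      ((3 * m ^ 2 + 1) * ((m + 1) * u ^ 2 - m + 1))) :
    ∃ r : ℚ, (m ^ 2 - 1) * (3 * m ^ 2 + 1) ^ 2 * h ^ 2 +
        2 * S₁ ^ 2 * (m ^ 4 - 1) * (3 * m ^ 2 + 1) * h +
        S₁ ^ 4 * m ^ 2 * (m ^ 2 + 3) ^ 2 = r ^ 2 := by
  rcases eq_or_ne u 0 with rfl | hu₀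
  · refine ⟨S₁ ^ 2 * m * (m ^ 2 + 3), ?_⟩
    simp only [hh, mul_zero, zero_mul, zero_div]
    ring
  set t := (m - 1) * (3 * m ^ 2 + 1) / u
  have hchord : ((m ^ 2 - 1) * (3 * m ^ 2 + 1) ^ 2 - t ^ 2) * h =
      2 * (S₁ ^ 2 * m * (m ^ 2 + 3)) * t - 2 * S₁ ^ 2 * (m ^ 4 - 1) * (3 * m ^ 2 + 1) := by
    have hu' : u ^ 2 * (m + 1) - m + 1 ≠ 0 := by rwa [mul_comm] at hu
    simp only [t, hh]
    field_simp
    ring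
  refine ⟨S₁ ^ 2 * m * (m ^ 2 + 3) + t * h, ?_⟩
  rw [← quadratic_eq_sq_of_chord hchord]
  ring

theorem stmt_8 (S₁ m u h : ℚ) (hS₁ : S₁ ≠ 0) (hm : 3 * m ^ 2 + 1 ≠ 0)
    (hu : (m + 1) * u ^ 2 - m + 1 ≠ 0)
    (hh : h = -2 * S₁ ^ 2 * u * ((m + 1) * (m ^ 2 + 1) * u - m * (m ^ 2 + 3)) /
      ((3 * m ^ 2 + 1) * ((m + 1) * u ^ 2 - m + 1))) :
    ∃ r : ℚ, (m ^ 2 - 1) * (3 * m ^ 2 + 1) ^ 2 * h ^ 2 +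
        2 * S₁ ^ 2 * (m ^ 4 - 1) * (3 * m ^ 2 + 1) * h +
        S₁ ^ 4 * m ^ 2 * (m ^ 2 + 3) ^ 2 = r ^ 2 :=
  stmt_8_general S₁ m u h hu hh
end
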